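/- For n odd, replacing any m = ⌊(n-1)/2⌋ points of a sample of n real numbers leaves the sample median within the range [min of remaining points, max of remaining points], so the median does not break down under replacement of fewer than half the points. -/
import Mathlib

open Finset

/-- The sample median: the middle order statistic (for n odd this is x_{(⌈n/2⌉)}). -/
noncomputable def sampleMedian {n : ℕ} (hn : 0 < n) (x : Fin n → ℝ) : ℝ :=
  x (Tuple.sort x ⟨n / 2, Nat.div_lt_self hn one_lt_two⟩)

/-- If at most m ≤ (n-1)/2 of the n points (n odd) are replaced, the median of
the contaminated sample stays between the min and max of the retained points. -/
theorem median_no_breakdown {n m : ℕ} (hn : Odd n) (hm : m ≤ (n - 1) / 2)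
    (x x' : Fin n → ℝ) (I : Finset (Fin n)) (hne : I.Nonempty)
    (hI : n - m ≤ I.card) (hagree : ∀ i ∈ I, x' i = x i) :
    I.inf' hne x ≤ sampleMedian hn.pos x' ∧ sampleMedian hn.pos x' ≤ I.sup' hne x := by
  have hn0 : 0 < n := hn.pos
  set k : Fin n := ⟨n / 2, Nat.div_lt_self hn0 one_lt_two⟩ with hk
  set σ := Tuple.sort x' with hσ
  have hmono : Monotone (x' ∘ σ) := Tuple.monotone_sort x'
  have hodd : n % 2 = 1 := Nat.odd_iff.mp hn
  have hm' : m ≤ n / 2 := by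
    refine hm.trans (Nat.div_le_div_right ?_)
    omega
  -- card bound helper
  have key : ∀ (S : Finset (Fin n)), n / 2 + 1 ≤ S.card → (I ∩ S).Nonempty := by
    intro S hS
    rw [← Finset.card_pos]
    have hu : (I ∪ S).card ≤ n := by
      simpa using Finset.card_le_card (Finset.subset_univ (I ∪ S))
    have := Finset.card_inter_add_card_union I S
    omega
  constructor
  · -- lower bound: indices j ≤ k map to values ≤ median
    obtain ⟨i, hi⟩ := key ((Finset.Iic k).image σ) (by
      rw [Finset.card_image_of_injective _ σ.injective, Fin.card_Iic])
    obtain ⟨hiI, hiS⟩ := Finset.mem_inter.mp hi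
    simp only [Finset.mem_image, Finset.mem_Iic] at hiS
    obtain ⟨j, hjk, hji⟩ := hiS
    have h1 : x' i ≤ sampleMedian hn0 x' := by
      have := hmono hjk
      simpa [sampleMedian, hji] using this
    exact le_trans (Finset.inf'_le _ hiI) (le_trans (hagree i hiI).symm.le h1)
  · -- upper bound: indices j ≥ k map to values ≥ median
    obtain ⟨i, hi⟩ := key ((Finset.Ici k).image σ) (by
      rw [Finset.card_image_of_injective _ σ.injective, Fin.card_Ici]
      have : (k : ℕ) = n / 2 := rfl
      omega)
    obtain ⟨hiI, hiS⟩ := Finset.mem_inter.mp hi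
    simp only [Finset.mem_image, Finset.mem_Ici] at hiS
    obtain ⟨j, hjk, hji⟩ := hiS
    have h1 : sampleMedian hn0 x' ≤ x' i := by
      have := hmono hjk
      simpa [sampleMedian, hji] using this
    exact le_trans (le_trans h1 (hagree i hiI).le) (Finset.le_sup' _ hiI)
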